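/- arXiv:2004.12093 — 4 statements merged into one kernel-verified Lean document; each statement's English description precedes it below -/
import Mathlib

section
/- Let m, n be positive integers and let w be a word in B_{m,n}. Then w is primitive: for every j with 1 ≤ j ≤ (m+1)n − 1, the j-th cyclic rotation rot^j(w) is not equal to w. -/
/-!
If `rot^j w = w` with `0 < j < (m + 1) n`, then `w` also has the period `g = gcd(j, (m + 1) n)`,
so `w = u^t` for its first block `u` of length `g` and some `t > 1`. Counting ones and zeros,
`u` has `|u|₁ = m n / t` ones and `n / t` zeros, so `t ∣ n`. The `b`-th copy of `u` contributes
`wt(u) + b g |u|₁`, hence `wt(w) = t wt(u) + g |u|₁ t (t - 1) / 2`, and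
`g |u|₁ = m (m + 1) (n / t)²` with `m (m + 1)` even makes the second term a multiple of `t`.
So `t ∣ wt(w)`, while `wt(w) ≡ -1 (mod n)` and `t ∣ n`: thus `t ∣ 1`, a contradiction.
-/

/-- The `j`-th cyclic rotation of a word `w` of length `k`:
`(rot j w)ᵢ = w_{i+j mod k}` (0-indexed), so `rot 1` sends `w₁w₂⋯w_k` to `w₂⋯w_k w₁`. -/
def rot {k : ℕ} (j : ℕ) (w : Fin k → Bool) : Fin k → Bool :=
  fun i => w ⟨((i : ℕ) + j) % k, Nat.mod_lt _ i.pos⟩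

/-- The weight of a 0/1 word: the sum of the (1-indexed) positions of its ones. -/
def wordWeight {k : ℕ} (w : Fin k → Bool) : ℕ :=
  ∑ i : Fin k, if w i = true then (i : ℕ) + 1 else 0

/-- Membership in `B_{m,n}`: a 0/1 word of length `(m+1)n` which is `m`-balanced
(exactly `mn` ones and `n` zeros), starts with a zero, and has weight `≡ -1 (mod n)`. -/
def memB (m n : ℕ) (w : Fin ((m + 1) * n) → Bool) : Prop :=
  (Finset.univ.filter fun i => w i = true).card = m * n ∧
  (Finset.univ.filter fun i => w i = false).card = n ∧
  (∀ i : Fin ((m + 1) * n), (i : ℕ) = 0 → w i = false) ∧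
  ((wordWeight w : ZMod n) = -1)

open Finset Function Fin.NatCast

theorem Function.Periodic.nat_gcd {α : Type*} {f : ℕ → α} {a b : ℕ} (ha : Periodic f a)
    (hb : Periodic f b) : Periodic f (a.gcd b) := by
  induction a, b using Nat.gcd.induction with
  | H0 b => simpa using hb
  | H1 a b _ ih =>
    rw [Nat.gcd_rec]
    refine ih (fun i => ?_) ha
    rw [← ha.nat_mul (b / a) (i + b % a), Nat.cast_id, add_assoc, Nat.mod_add_div', hb]

section BlockSums

theorem Finset.sum_range_mul_eq_sum_sum {M : Type*} [AddCommMonoid M] (f : ℕ → M) (g t : ℕ) :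
    ∑ i ∈ range (g * t), f i = ∑ b ∈ range t, ∑ r ∈ range g, f (g * b + r) := by
  induction t with
  | zero => simp
  | succ t ih => rw [Nat.mul_succ, sum_range_add, ih, sum_range_succ]

theorem Function.Periodic.apply_mul_add {α : Type*} {f : ℕ → α} {g : ℕ} (hf : Periodic f g)
    (b r : ℕ) : f (g * b + r) = f r := by
  rw [add_comm, mul_comm]
  exact hf.nat_mul b r

variable {M : Type*} [AddCommMonoid M] {f : ℕ → M} {g : ℕ}

theorem Function.Periodic.sum_range_mul (hf : Periodic f g) (t : ℕ) :
    ∑ i ∈ range (g * t), f i = t • ∑ r ∈ range g, f r := by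
  simp [sum_range_mul_eq_sum_sum, hf.apply_mul_add]

theorem Function.Periodic.sum_range_mul_nsmul (hf : Periodic f g) (t : ℕ) :
    ∑ i ∈ range (g * t), i • f i =
      t • ∑ r ∈ range g, r • f r + (g * ∑ b ∈ range t, b) • ∑ r ∈ range g, f r := by
  simp only [sum_range_mul_eq_sum_sum, hf.apply_mul_add, add_smul, sum_add_distrib, ← smul_sum,
    ← sum_smul, sum_const, card_range, ← mul_sum (range t) _ g]
  exact add_comm _ _

end BlockSums

section Words

/- A word `w : Fin k → _` is handled through its periodic extension `fun i : ℕ => w i`,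
the cast reducing `i` mod `k`. -/

variable {k : ℕ} [NeZero k]

theorem Fin.periodic_apply_natCast {α : Type*} (w : Fin k → α) :
    Periodic (fun i : ℕ => w (i : Fin k)) k := by
  intro i
  simp

theorem periodic_apply_natCast_of_rot_eq {j : ℕ} {w : Fin k → Bool} (h : rot j w = w) :
    Periodic (fun i : ℕ => w (i : Fin k)) j := by
  intro i
  dsimp only
  rw [← congrFun h i]
  simp only [rot]
  congr 1
  ext
  simp only [Fin.val_natCast, Nat.mod_add_mod]

theorem card_filter_eq_true_eq_sum_range (w : Fin k → Bool) :
    #(univ.filter fun i => w i = true) = ∑ i ∈ range k, (w (i : Fin k)).toNat := by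
  rw [card_filter, ← Fin.sum_univ_eq_sum_range (fun i => (w (i : Fin k)).toNat)]
  refine sum_congr rfl fun i _ => ?_
  rw [Fin.cast_val_eq_self]
  cases w i <;> rfl

theorem wordWeight_eq_sum_range (w : Fin k → Bool) :
    wordWeight w = ∑ i ∈ range k, (i + 1) * (w (i : Fin k)).toNat := by
  rw [wordWeight, ← Fin.sum_univ_eq_sum_range (fun i => (i + 1) * (w (i : Fin k)).toNat)]
  refine sum_congr rfl fun i _ => ?_
  rw [Fin.cast_val_eq_self]
  cases w i <;> simp

end Words

/-- The arithmetic of a word of length `(m + 1) n` made of `t` copies of a block of length `g`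
with `a` ones: `M` is the weight of the block, `g a (0 + ⋯ + (t - 1))` the shift of the
later copies. -/
theorem eq_one_of_block_counts {m n g t a M : ℕ} (hlen : (m + 1) * n = g * t)
    (hones : m * n = t * a) (hwt : n ∣ t * M + g * (∑ b ∈ range t, b) * a + 1) : t = 1 := by
  have ht : 0 < t := by
    rcases Nat.eq_zero_or_pos t with rfl | ht
    · obtain rfl : n = 0 := by simpa using hlen
      simp at hwt
    · exact ht
  have hsplit : t * g = t * a + n := by rw [mul_comm t g, ← hlen, ← hones]; ring
  obtain ⟨u, rfl⟩ : t ∣ n := ⟨g - a, by rw [Nat.mul_sub]; omega⟩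
  have ha : a = m * u := Nat.eq_of_mul_eq_mul_left ht (by rw [← hones]; ring)
  have hg : g = (m + 1) * u := Nat.eq_of_mul_eq_mul_left ht (by rw [mul_comm t g, ← hlen]; ring)
  obtain ⟨h, hh⟩ := Nat.even_mul_succ_self m
  have hdvd : t ∣ t * M + g * (∑ b ∈ range t, b) * a := by
    refine dvd_add (dvd_mul_right _ _) ⟨h * u * u * (t - 1), ?_⟩
    apply Nat.eq_of_mul_eq_mul_right two_pos
    calc g * (∑ b ∈ range t, b) * a * 2 = m * (m + 1) * u * u * ((∑ b ∈ range t, b) * 2) := by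
          rw [ha, hg]; ring
      _ = t * (h * u * u * (t - 1)) * 2 := by rw [sum_range_id_mul_two, hh]; ring
  exact Nat.dvd_one.1 ((Nat.dvd_add_right hdvd).1 ((dvd_mul_right t u).trans hwt))

theorem memB.eq_one_of_periodic {m n g t : ℕ} [NeZero ((m + 1) * n)]
    {w : Fin ((m + 1) * n) → Bool} (hw : memB m n w)
    (hg : Periodic (fun i : ℕ => w (i : Fin ((m + 1) * n))) g)
    (hk : (m + 1) * n = g * t) : t = 1 := by
  obtain ⟨hones, -, -, hwt⟩ := hw
  have hdvd : n ∣ wordWeight w + 1 :=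
    (ZMod.natCast_eq_zero_iff _ _).1 (by rw [Nat.cast_succ, hwt, neg_add_cancel])
  rw [card_filter_eq_true_eq_sum_range] at hones
  rw [wordWeight_eq_sum_range] at hdvd
  obtain ⟨f, hf, hwf⟩ : ∃ f : ℕ → ℕ, Periodic f g ∧ ∀ i : ℕ, (w i).toNat = f i :=
    ⟨_, hg.comp Bool.toNat, fun _ => rfl⟩
  simp only [hwf] at hones hdvd
  rw [hk, hf.sum_range_mul, smul_eq_mul] at hones
  refine eq_one_of_block_counts hk hones.symm (M := ∑ r ∈ range g, (r + 1) * f r) ?_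
  convert hdvd using 2
  have hmoment := hf.sum_range_mul_nsmul t
  simp only [smul_eq_mul] at hmoment
  simp only [hk, add_mul, one_mul, sum_add_distrib, hmoment, hf.sum_range_mul, smul_eq_mul]
  ring

theorem every_word_in_B_is_primitive_general (m n : ℕ)
    (w : Fin ((m + 1) * n) → Bool) (hw : memB m n w) :
    ∀ j : ℕ, 1 ≤ j → j ≤ (m + 1) * n - 1 → rot j w ≠ w := by
  intro j hj hjk hrot
  have : NeZero ((m + 1) * n) := ⟨by omega⟩
  have hper : Periodic (fun i : ℕ => w (i : Fin ((m + 1) * n))) (j.gcd ((m + 1) * n)) :=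
    (periodic_apply_natCast_of_rot_eq hrot).nat_gcd (Fin.periodic_apply_natCast w)
  obtain ⟨t, hk⟩ := Nat.gcd_dvd_right j ((m + 1) * n)
  have ht : t = 1 := hw.eq_one_of_periodic hper hk
  have hgj := Nat.gcd_le_left ((m + 1) * n) hj
  rw [ht, mul_one] at hk
  omega

/-- Every word in `B_{m,n}` is primitive: no proper cyclic rotation of it equals itself. -/
theorem every_word_in_B_is_primitive (m n : ℕ) (hm : 0 < m) (hn : 0 < n)
    (w : Fin ((m + 1) * n) → Bool) (hw : memB m n w) :
    ∀ j : ℕ, 1 ≤ j → j ≤ (m + 1) * n - 1 → rot j w ≠ w :=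
  every_word_in_B_is_primitive_general m n w hw
end

section
/- Let m, n be positive integers. The cardinality of Y_{m,n} equals the number of subsets S of {1, 2, …, (m+1)n − 1} with |S| = mn whose element sum is congruent to −1 modulo n. -/
/-- The constant `c_{m,n} = (mn-2)(n-1)/2` (natural subtraction and division agree with
the intended integer value for all positive `m, n`). -/
def cmn (m n : ℕ) : ℕ := (m * n - 2) * (n - 1) / 2

/-- Membership in `C_{m,n}`: tuples `(x₁,…,x_N)` with `x_i ∈ {0,…,n-1}` and
`x₁+⋯+x_N ≡ c_{m,n} (mod n)`. -/
def memC (m n : ℕ) (x : Fin (m * n) → Fin n) : Prop :=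
  ((∑ i, (x i : ℕ) : ℕ) : ZMod n) = (cmn m n : ZMod n)

/-- Membership in `Y_{m,n}`: the weakly decreasing tuples in `C_{m,n}`. -/
def memY (m n : ℕ) (x : Fin (m * n) → Fin n) : Prop :=
  memC m n x ∧ Antitone x

/-! Stars and bars: with `N = mn` and indices `i = 0, …, N - 1`, the map `x ↦ {i + (n - xᵢ)}`
is a bijection from weakly decreasing tuples `Fin N → Fin n` to `N`-element subsets of
`{1, …, N + n - 1}`, under which the subset sum plus the tuple sum is the constant
`N(N-1)/2 + Nn`. Since `c_{m,n} ≡ N(N-1)/2 + 1 (mod n)`, the tuple sum is `≡ c_{m,n}` exactly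
when the subset sum is `≡ -1`. -/

open Finset

lemma StrictMono.monotone_sub_val {N : ℕ} {f : Fin N → ℕ} (hf : StrictMono f) :
    Monotone fun i => f i - i := by
  cases N with
  | zero => exact fun i => i.elim0
  | succ N =>
    refine Fin.monotone_iff_le_succ.2 fun i => ?_
    have := hf i.castSucc_lt_succ
    simp only [Fin.val_castSucc, Fin.val_succ]
    omega

section Spread

variable {N n : ℕ}

def spread (x : Fin N → Fin n) (i : Fin N) : ℕ := i + (n - x i)

lemma spread_add_val (x : Fin N → Fin n) (i : Fin N) : spread x i + x i = i + n := by
  have := (x i).isLt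
  unfold spread
  omega

lemma strictMono_spread {x : Fin N → Fin n} (hx : Antitone x) : StrictMono (spread x) := by
  intro i j hij
  have := hx hij.le
  have := (x i).isLt
  have : (i : ℕ) < j := hij
  simp only [spread, Fin.le_def] at *
  omega

lemma spread_mem_Icc (x : Fin N → Fin n) (i : Fin N) : spread x i ∈ Icc 1 (N + n - 1) := by
  have := (x i).isLt
  have := i.isLt
  simp only [spread, mem_Icc]
  omega

lemma exists_antitone_spread_eq {e : Fin N → ℕ} (he : StrictMono e)
    (he_mem : ∀ i, e i ∈ Icc 1 (N + n - 1)) : ∃ x : Fin N → Fin n, Antitone x ∧ spread x = e := by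
  have hgap (i : Fin N) : 1 ≤ e i - i ∧ e i - i ≤ n := by
    have hN : 0 < N := i.pos
    have h₀ : e ⟨0, hN⟩ - 0 ≤ e i - i := he.monotone_sub_val (Nat.zero_le i)
    have h₁ : e i - i ≤ e ⟨N - 1, by omega⟩ - (N - 1) :=
      he.monotone_sub_val (Nat.le_sub_one_of_lt i.isLt)
    have := mem_Icc.1 (he_mem ⟨0, hN⟩)
    have := mem_Icc.1 (he_mem ⟨N - 1, by omega⟩)
    omega
  refine ⟨fun i => ⟨n - (e i - i), by have := hgap i; omega⟩, fun i j hij => ?_, funext fun i => ?_⟩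
  · have : e i - i ≤ e j - j := he.monotone_sub_val hij
    have := hgap j
    simp only [Fin.le_def]
    omega
  · have := hgap i
    simp only [spread]
    omega

lemma spread_injective : Function.Injective (spread : (Fin N → Fin n) → Fin N → ℕ) :=
  fun x y h => funext fun i => Fin.ext <| by
    have := spread_add_val x i
    have := spread_add_val y i
    rw [h] at *
    omega

variable (N n) in
noncomputable def antitoneEquivFinsetIcc :
    {x : Fin N → Fin n // Antitone x} ≃ {S : Finset ℕ // S ⊆ Icc 1 (N + n - 1) ∧ S.card = N} :=
  Equiv.ofBijective
    (fun x => ⟨univ.image (spread x.1), image_subset_iff.2 fun i _ => spread_mem_Icc x.1 i,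
      by rw [card_image_of_injective _ (strictMono_spread x.2).injective, card_fin]⟩)
    ⟨fun x y h => Subtype.ext <| spread_injective <| (strictMono_spread x.2).range_inj
        (strictMono_spread y.2) |>.1 <| by simpa using congrArg (fun S => (S.1 : Set ℕ)) h,
      fun ⟨S, hS, hcard⟩ => by
        obtain ⟨x, hx, hxe⟩ := exists_antitone_spread_eq (S.orderEmbOfFin hcard).strictMono
          fun i => hS (S.orderEmbOfFin_mem hcard i)
        exact ⟨⟨x, hx⟩, Subtype.ext <| coe_injective <| by simp [hxe]⟩⟩

lemma coe_antitoneEquivFinsetIcc (x : {x : Fin N → Fin n // Antitone x}) :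
    (antitoneEquivFinsetIcc N n x : Finset ℕ) = univ.image (spread x.1) :=
  rfl

lemma sum_antitoneEquivFinsetIcc_add_sum (x : {x : Fin N → Fin n // Antitone x}) :
    ∑ s ∈ (antitoneEquivFinsetIcc N n x).1, s + ∑ i, (x.1 i : ℕ) = ∑ i ∈ range N, i + N * n := by
  rw [coe_antitoneEquivFinsetIcc, sum_image fun i _ j _ h => (strictMono_spread x.2).injective h,
    ← sum_add_distrib, sum_congr rfl fun i _ => spread_add_val x.1 i, sum_add_distrib,
    Fin.sum_univ_eq_sum_range (fun i => i)]
  simp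

end Spread

lemma natCast_cmn {m n : ℕ} (hm : 0 < m) (hn : 0 < n) :
    (cmn m n : ZMod n) = ((∑ i ∈ range (m * n), i : ℕ) : ZMod n) + 1 := by
  obtain rfl | hn₂ : n = 1 ∨ 2 ≤ n := by omega
  · exact Subsingleton.elim _ _
  have hN : 2 ≤ m * n := by nlinarith
  obtain ⟨k, hk⟩ := Nat.even_mul_pred_self m
  have hc : cmn m n * 2 = (m * n - 2) * (n - 1) := by
    refine Nat.div_two_mul_two_of_even <| Nat.even_mul.2 ?_
    rcases Nat.even_or_odd n with h | h
    · exact .inl <| (Nat.even_sub hN).2 <| by simp [h]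
    · exact .inr <| (Nat.even_sub hn).2 <| by simp [Nat.not_even_iff_odd.2 h]
  have hT := sum_range_id_mul_two (m * n)
  have key : ∑ i ∈ range (m * n), i + 1 = cmn m n + n * (n * k + 1) := by
    qify [hN, (by omega : 1 ≤ n), (by omega : 1 ≤ m), (by omega : 1 ≤ m * n)] at hc hT hk ⊢
    linear_combination (hT - hc + n * n * hk) / 2
  rw [← Nat.cast_one, ← Nat.cast_add, key]
  simp

/-- `|Y_{m,n}|` equals the number of subsets `S ⊆ {1,…,(m+1)n - 1}` with `|S| = mn`
whose element sum is `≡ -1 (mod n)`. -/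
theorem card_Y_eq_card_subsets (m n : ℕ) (hm : 0 < m) (hn : 0 < n) :
    Nat.card {l : Fin (m * n) → Fin n // memY m n l} =
      Nat.card {S : Finset ℕ // S ⊆ Finset.Icc 1 ((m + 1) * n - 1) ∧ S.card = m * n ∧
        ((∑ s ∈ S, s : ℕ) : ZMod n) = -1} := by
  rw [add_mul, one_mul]
  refine Nat.card_congr <|
    (Equiv.subtypeEquivRight fun x => and_comm).trans <|
    (Equiv.subtypeSubtypeEquivSubtypeInter _ _).symm.trans <|
    ((antitoneEquivFinsetIcc (m * n) n).subtypeEquiv fun x => ?_).trans <|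
    (Equiv.subtypeSubtypeEquivSubtypeInter _ _).trans (Equiv.subtypeEquivRight fun S => and_assoc)
  have hsum := congrArg (Nat.cast : ℕ → ZMod n) (sum_antitoneEquivFinsetIcc_add_sum x)
  have hc := natCast_cmn hm hn
  push_cast [ZMod.natCast_self, mul_zero, add_zero] at hsum hc
  unfold memC
  push_cast
  constructor <;> intro h <;> linear_combination hsum - hc - h
end

section
/- Let n ≥ 2. The number of lattice points of the permutahedron P_{δ_n} equals n^{n−2}; that is, |{x ∈ ℤ^n : x ∈ convexHull(S_n-orbit of δ_n)}| = n^{n−2}. -/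
/-!
The integer points of `P_δ` are the integer vectors majorized by `δ = δ_n`: same coordinate sum,
and any `k` coordinates sum to at most the sum of the `k` largest entries of `δ`. These are linear
inequalities valid at the vertices, which gives one inclusion; the other is the integer form of
Rado's theorem, proved by Robin Hood transfers (moving a unit from a large to a small coordinate
of `a`), which keep `x` majorized by `a` and decrease `∑ aᵢ²`.

Adding constants modulo `n` then gives a bijection `Lat(P_δ) × ℤ/n ≃ {v ∈ (ℤ/n)ⁿ | ∑ v = ∑ δ}`,
and the right-hand side has `n^(n-1)` elements. Every class has a majorized representative: among
integer lifts with the right sum, one minimizing `∑ wᵢ²` is majorized, since a violated subset `S`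
can be lowered by `n` while every coordinate is raised by `|S|`. It has only one: two majorized
vectors that are congruent up to a constant differ by `c` on a set and by `c - n` on its
complement, and majorization fails there unless `c = 0`.
-/

/-- The tuple `δ_n = (n-2, n-3, …, 1, 0, 0)`: its `i`-th coordinate (0-indexed) is
`n - 2 - i` (natural subtraction). -/
def deltaTuple (n : ℕ) : Fin n → ℕ := fun i => n - 2 - (i : ℕ)

/-- The vertices of the permutahedron `P_{δ_n}`: all coordinate permutations of `δ_n`,
viewed as points of `ℝⁿ`. -/
def permutahedronVerts (n : ℕ) : Set (Fin n → ℝ) :=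
  {y | ∃ σ : Equiv.Perm (Fin n), y = fun i => (deltaTuple n (σ i) : ℝ)}

/-- The lattice points of `P_{δ_n}`: integer points whose real image lies in the convex
hull of the coordinate permutations of `δ_n`. -/
def latticePts (n : ℕ) : Set (Fin n → ℤ) :=
  {x | (fun i => (x i : ℝ)) ∈ convexHull ℝ (permutahedronVerts n)}

open Finset

namespace Permutahedron

section Majorization

variable {ι : Type*}

def permOrbit (a : ι → ℝ) : Set (ι → ℝ) := Set.range fun σ : Equiv.Perm ι => a ∘ σ

lemma convexHull_permOrbit_subset {a b : ι → ℝ} (h : b ∈ convexHull ℝ (permOrbit a)) :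
    convexHull ℝ (permOrbit b) ⊆ convexHull ℝ (permOrbit a) := by
  refine convexHull_min ?_ (convex_convexHull ℝ _)
  rintro _ ⟨σ, rfl⟩
  have hσ : LinearMap.funLeft ℝ ℝ σ '' permOrbit a ⊆ permOrbit a := by
    rintro _ ⟨_, ⟨τ, rfl⟩, rfl⟩
    exact ⟨τ * σ, rfl⟩
  exact convexHull_mono hσ <| (LinearMap.funLeft ℝ ℝ σ).image_convexHull (permOrbit a) ▸
    Set.mem_image_of_mem _ h

lemma isLinearMap_sum_apply (S : Finset ι) : IsLinearMap ℝ fun y : ι → ℝ => ∑ i ∈ S, y i :=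
  ⟨fun _ _ => Finset.sum_add_distrib, fun c y => (Finset.mul_sum S y c).symm⟩

lemma sum_le_of_mem_convexHull_permOrbit {a y : ι → ℝ} {S : Finset ι} {r : ℝ}
    (ha : ∀ σ : Equiv.Perm ι, ∑ i ∈ S, a (σ i) ≤ r) (hy : y ∈ convexHull ℝ (permOrbit a)) :
    ∑ i ∈ S, y i ≤ r :=
  convexHull_min (t := {z : ι → ℝ | ∑ i ∈ S, z i ≤ r}) (by rintro _ ⟨σ, rfl⟩; exact ha σ)
    (convex_halfSpace_le (isLinearMap_sum_apply S) r) hy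

section transfer

variable [DecidableEq ι]

def transfer (a : ι → ℤ) (i j : ι) : ι → ℤ := a - Pi.single i 1 + Pi.single j 1

variable {a : ι → ℤ} {i j : ι}

lemma transfer_apply_left (hij : i ≠ j) : transfer a i j i = a i - 1 := by
  simp [transfer, hij]

lemma transfer_apply_right (hij : i ≠ j) : transfer a i j j = a j + 1 := by
  simp [transfer, hij.symm]

lemma transfer_apply_of_ne {k : ι} (hi : k ≠ i) (hj : k ≠ j) : transfer a i j k = a k := by
  simp [transfer, hi, hj]

lemma transfer_mem_convexHull_permOrbit (h : a j + 1 ≤ a i) :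
    (fun k => (transfer a i j k : ℝ)) ∈ convexHull ℝ (permOrbit fun k => (a k : ℝ)) := by
  have hij : i ≠ j := by rintro rfl; omega
  have hd : (1 : ℝ) ≤ a i - a j := by exact_mod_cast (by omega : (1 : ℤ) ≤ a i - a j)
  -- `transfer a i j` is `(1 - θ) • a + θ • (a ∘ swap i j)` with `θ = 1 / (a i - a j)`
  set θ : ℝ := 1 / (a i - a j)
  have hθ : θ * (a i - a j) = 1 := one_div_mul_cancel (by linarith)
  have hθ₀ : 0 ≤ θ := by positivity
  have hθ₁ : θ ≤ 1 := div_le_one_of_le₀ hd (by linarith)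
  clear_value θ
  have h₁ : (fun k => (a k : ℝ)) ∈ permOrbit (fun k => (a k : ℝ)) := ⟨1, rfl⟩
  have h₂ : (fun k => (a k : ℝ)) ∘ Equiv.swap i j ∈ permOrbit (fun k => (a k : ℝ)) := ⟨_, rfl⟩
  refine segment_subset_convexHull h₁ h₂ ⟨1 - θ, θ, by linarith, hθ₀, by ring, funext fun k => ?_⟩
  simp only [Pi.add_apply, Pi.smul_apply, smul_eq_mul, Function.comp_apply]
  by_cases hi : k = i
  · subst hi
    rw [transfer_apply_left hij, Equiv.swap_apply_left]
    push_cast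
    linear_combination -hθ
  · by_cases hj : k = j
    · subst hj
      rw [transfer_apply_right hij, Equiv.swap_apply_right]
      push_cast
      linear_combination hθ
    · rw [transfer_apply_of_ne hi hj, Equiv.swap_apply_of_ne_of_ne hi hj]
      ring

end transfer

variable [Fintype ι]

lemma sum_eq_of_mem_convexHull_permOrbit {a y : ι → ℝ} (hy : y ∈ convexHull ℝ (permOrbit a)) :
    ∑ i, y i = ∑ i, a i :=
  convexHull_min (t := {z : ι → ℝ | ∑ i, z i = ∑ i, a i})
    (by rintro _ ⟨σ, rfl⟩; exact Equiv.sum_comp σ a)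
    (convex_hyperplane (isLinearMap_sum_apply _) _) hy

/-- For integer vectors with equal sums, `x` is majorized by `a` exactly when
`excess x ≤ excess a` pointwise. -/
def excess (y : ι → ℤ) (t : ℤ) : ℤ := ∑ i, ((y i - t).toNat : ℤ)

lemma excess_of_forall_le {y : ι → ℤ} {t : ℤ} (h : ∀ i, y i ≤ t) : excess y t = 0 :=
  Finset.sum_eq_zero fun i _ => by have := h i; omega

lemma excess_of_forall_ge {y : ι → ℤ} {t : ℤ} (h : ∀ i, t ≤ y i) :
    excess y t = ∑ i, y i - Fintype.card ι * t := by
  rw [excess, Finset.sum_congr rfl fun i _ => Int.toNat_of_nonneg (sub_nonneg.2 (h i)),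
    Finset.sum_sub_distrib, Finset.sum_const, Finset.card_univ, nsmul_eq_mul]

lemma sum_sub_card_mul_le_excess (y : ι → ℤ) (S : Finset ι) (t : ℤ) :
    ∑ i ∈ S, y i - #S * t ≤ excess y t := by
  rw [← nsmul_eq_mul, ← Finset.sum_const, ← Finset.sum_sub_distrib]
  calc ∑ i ∈ S, (y i - t) ≤ ∑ i ∈ S, ((y i - t).toNat : ℤ) :=
        Finset.sum_le_sum fun i _ => Int.self_le_toNat _
    _ ≤ excess y t :=
        Finset.sum_le_sum_of_subset_of_nonneg (Finset.subset_univ S) fun i _ _ => by positivity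

lemma excess_eq_sum_filter (y : ι → ℤ) (t : ℤ) :
    excess y t = ∑ i with t < y i, (y i - t) := by
  rw [Finset.sum_filter, excess]
  exact Finset.sum_congr rfl fun i _ => by split_ifs <;> omega

lemma excess_sub_two_mul_excess_add_excess (y : ι → ℤ) (v : ℤ) :
    excess y (v - 1) - 2 * excess y v + excess y (v + 1) = #{i | y i = v} := by
  rw [Finset.natCast_card_filter, excess, excess, excess, Finset.mul_sum,
    ← Finset.sum_sub_distrib, ← Finset.sum_add_distrib]
  exact Finset.sum_congr rfl fun i _ => by split_ifs <;> omega

lemma exists_perm_comp_eq_of_card_fiber_eq {α : Type*} [DecidableEq α] {x a : ι → α}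
    (h : ∀ v, #{i | x i = v} = #{i | a i = v}) : ∃ σ : Equiv.Perm ι, x = a ∘ σ := by
  have e : ∀ v, {i // x i = v} ≃ {i // a i = v} := fun v =>
    Fintype.equivOfCardEq (by simpa only [Fintype.card_subtype] using h v)
  exact ⟨(Equiv.sigmaFiberEquiv x).symm.trans
    ((Equiv.sigmaCongrRight e).trans (Equiv.sigmaFiberEquiv a)),
    funext fun i => (e (x i) ⟨i, rfl⟩).2.symm⟩

lemma exists_perm_comp_eq_of_excess_eq {x a : ι → ℤ} (h : ∀ t, excess x t = excess a t) :
    ∃ σ : Equiv.Perm ι, x = a ∘ σ :=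
  exists_perm_comp_eq_of_card_fiber_eq fun v => by
    have hx := excess_sub_two_mul_excess_add_excess x v
    have ha := excess_sub_two_mul_excess_add_excess a v
    rw [h, h, h] at hx
    omega

lemma exists_eq_of_excess_eq_of_lt {x a : ι → ℤ} {v : ℤ} (hle : ∀ t, excess x t ≤ excess a t)
    (heq : excess x v = excess a v)
    (hlt : excess x (v - 1) < excess a (v - 1) ∨ excess x (v + 1) < excess a (v + 1)) :
    ∃ i, a i = v := by
  have hx := excess_sub_two_mul_excess_add_excess x v
  have ha := excess_sub_two_mul_excess_add_excess a v
  have hpos : 0 < #{i | a i = v} := by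
    have := hle (v - 1); have := hle (v + 1)
    omega
  obtain ⟨i, hi⟩ := Finset.card_pos.1 hpos
  exact ⟨i, (Finset.mem_filter.1 hi).2⟩

variable [DecidableEq ι]

lemma sum_comp_transfer (f : ℤ → ℤ) {a : ι → ℤ} {i j : ι} (hij : i ≠ j) :
    ∑ k, f (transfer a i j k) =
      ∑ k, f (a k) + (f (a i - 1) - f (a i)) + (f (a j + 1) - f (a j)) := by
  have h : ∀ k, f (transfer a i j k) = f (a k) + (if k = i then f (a i - 1) - f (a i) else 0)
      + (if k = j then f (a j + 1) - f (a j) else 0) := by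
    intro k
    by_cases hi : k = i
    · subst hi; simp [transfer_apply_left hij, hij]
    · by_cases hj : k = j
      · subst hj; simp [transfer_apply_right hij, hi]
      · simp [transfer_apply_of_ne hi hj, hi, hj]
  rw [Finset.sum_congr rfl fun k _ => h k, Finset.sum_add_distrib, Finset.sum_add_distrib,
    Finset.sum_ite_eq' Finset.univ i, Finset.sum_ite_eq' Finset.univ j]
  simp only [Finset.mem_univ, if_true]

lemma exists_transfer_excess_le {x a : ι → ℤ} (hsum : ∑ i, x i = ∑ i, a i)
    (hle : ∀ t, excess x t ≤ excess a t) {t₀ : ℤ} (ht₀ : excess x t₀ < excess a t₀) :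
    ∃ i j, a j + 2 ≤ a i ∧ ∀ t, excess x t ≤ excess (transfer a i j) t := by
  obtain ⟨U, hU⟩ := Finite.exists_le fun i => max (x i) (a i)
  obtain ⟨L, hL⟩ := Finite.exists_ge fun i => min (x i) (a i)
  have hhi : ∀ t, U ≤ t → excess x t = excess a t := fun t ht => by
    rw [excess_of_forall_le fun i => (le_max_left _ _).trans ((hU i).trans ht),
      excess_of_forall_le fun i => (le_max_right _ _).trans ((hU i).trans ht)]
  have hlo : ∀ t, t ≤ L → excess x t = excess a t := fun t ht => by
    rw [excess_of_forall_ge fun i => ht.trans ((hL i).trans (min_le_left _ _)),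
      excess_of_forall_ge fun i => ht.trans ((hL i).trans (min_le_right _ _)), hsum]
  -- `excess a - excess x` is positive on `(s, t₂]` and vanishes at `s` and `t₂ + 1`, so `a` has
  -- coordinates equal to `t₂ + 1` and to `s`; moving a unit between them lowers `excess a` by
  -- exactly one on `(s, t₂]`.
  obtain ⟨t₂, ht₂, ht₂max⟩ := Int.exists_greatest_of_bdd
    (P := fun t => excess x t < excess a t)
    ⟨U, fun t ht => le_of_not_gt fun h => ht.ne (hhi t h.le)⟩ ⟨t₀, ht₀⟩
  obtain ⟨s, ⟨hst, hs⟩, hsmax⟩ := Int.exists_greatest_of_bdd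
    (P := fun t => t < t₂ ∧ excess x t = excess a t)
    ⟨t₂, fun t ht => ht.1.le⟩
    ⟨min L (t₂ - 1), by omega, hlo _ (min_le_left _ _)⟩
  have hgap : ∀ t, s < t → t ≤ t₂ → excess x t < excess a t := fun t h₁ h₂ =>
    (hle t).lt_of_ne fun h => by
      have := hsmax t ⟨h₂.lt_of_ne (by rintro rfl; exact ht₂.ne h), h⟩
      omega
  obtain ⟨i, hi⟩ : ∃ i, a i = t₂ + 1 := by
    refine exists_eq_of_excess_eq_of_lt hle ((hle _).antisymm ?_) (Or.inl (by simpa using ht₂))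
    exact le_of_not_gt fun h => by have := ht₂max _ h; omega
  obtain ⟨j, hj⟩ : ∃ j, a j = s :=
    exists_eq_of_excess_eq_of_lt hle hs (Or.inr (hgap _ (by omega) (by omega)))
  have hij : i ≠ j := by rintro rfl; omega
  refine ⟨i, j, by omega, fun t => ?_⟩
  have htransfer : excess (transfer a i j) t = excess a t + (((a i - 1 - t).toNat : ℤ) -
      (a i - t).toNat) + (((a j + 1 - t).toNat : ℤ) - (a j - t).toNat) :=
    sum_comp_transfer (fun z => ((z - t).toNat : ℤ)) hij
  rw [htransfer, hi, hj]
  have := hle t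
  by_cases ht : s < t ∧ t ≤ t₂
  · have := hgap t ht.1 ht.2
    omega
  · omega

theorem mem_convexHull_permOrbit_of_excess_le (a x : ι → ℤ) (hsum : ∑ i, x i = ∑ i, a i)
    (hle : ∀ t, excess x t ≤ excess a t) :
    (fun i => (x i : ℝ)) ∈ convexHull ℝ (permOrbit fun i => (a i : ℝ)) := by
  by_cases heq : ∀ t, excess x t = excess a t
  · obtain ⟨σ, rfl⟩ := exists_perm_comp_eq_of_excess_eq heq
    exact subset_convexHull ℝ _ ⟨σ, rfl⟩
  · obtain ⟨t₀, ht₀⟩ := not_forall.1 heq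
    obtain ⟨i, j, hij, hle'⟩ := exists_transfer_excess_le hsum hle ((hle t₀).lt_of_ne ht₀)
    have hsum' : ∑ k, x k = ∑ k, transfer a i j k := by
      have := sum_comp_transfer id (a := a) (show i ≠ j by rintro rfl; omega)
      simp only [id] at this
      omega
    exact convexHull_permOrbit_subset (transfer_mem_convexHull_permOrbit (by omega))
      (mem_convexHull_permOrbit_of_excess_le (transfer a i j) x hsum' hle')
termination_by (∑ i, a i ^ 2).toNat
decreasing_by
  have hsq := sum_comp_transfer (· ^ 2) (a := a) (show i ≠ j by rintro rfl; omega)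
  have : 0 ≤ ∑ k, transfer a i j k ^ 2 := Finset.sum_nonneg fun k _ => sq_nonneg _
  have : ∑ k, transfer a i j k ^ 2 < ∑ k, a k ^ 2 := by nlinarith
  omega

end Majorization

section Residues

lemma card_sum_eq_mul_card {ι G : Type*} [Fintype ι] [DecidableEq ι] [AddCommGroup G] [Finite G]
    (i₀ : ι) (a : G) :
    Nat.card {v : ι → G // ∑ i, v i = a} * Nat.card G = Nat.card G ^ Fintype.card ι := by
  have hsub (v : ι → G) : ∑ i, (v - Pi.single i₀ (∑ i, v i - a) : ι → G) i = a := by simp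
  let e : {v : ι → G // ∑ i, v i = a} × G ≃ (ι → G) :=
    { toFun := fun p => p.1.1 + Pi.single i₀ p.2
      invFun := fun v => (⟨_, hsub v⟩, ∑ i, v i - a)
      left_inv := fun ⟨⟨v, hv⟩, c⟩ => by simp [Finset.sum_add_distrib, hv]
      right_inv := fun v => by simp }
  rw [← Nat.card_prod, Nat.card_congr e, Nat.card_fun, Nat.card_eq_fintype_card (α := ι)]

variable {n : ℕ} [NeZero n]

lemma exists_intCast_eq_of_sum_eq {ι : Type*} [Fintype ι] [DecidableEq ι] (i₀ : ι)
    (v : ι → ZMod n) {g : ℤ} (hv : ∑ i, v i = g) :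
    ∃ w : ι → ℤ, ∑ i, w i = g ∧ ∀ i, (w i : ZMod n) = v i := by
  set u : ι → ℤ := fun i => (v i).val
  have hu : ∀ i, (u i : ZMod n) = v i := fun i => by simp [u]
  have hA : ((∑ i, u i - g : ℤ) : ZMod n) = 0 := by push_cast [hu, hv]; ring
  refine ⟨u - Pi.single i₀ (∑ i, u i - g), by simp [Finset.sum_sub_distrib], fun i => ?_⟩
  rcases eq_or_ne i i₀ with rfl | hi
  · simp [hu, hA]
  · simp [hu, hi]

lemma eq_val_or_eq_val_sub {d : ℤ} (h₁ : -n < d) (h₂ : d < n) :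
    d = (d : ZMod n).val ∨ d = (d : ZMod n).val - n := by
  rw [ZMod.val_intCast]
  rcases le_or_gt 0 d with hd | hd
  · exact Or.inl (Int.emod_eq_of_lt hd h₂).symm
  · right
    rw [← Int.add_emod_right, Int.emod_eq_of_lt (by omega) (by omega)]
    ring

end Residues

def delta (n : ℕ) : Fin n → ℤ := fun i => deltaTuple n i

def topSum (n k : ℕ) : ℤ := ∑ i ∈ range k, ((n - 2 - i : ℕ) : ℤ)

def majorizedByDelta (n : ℕ) : Set (Fin n → ℤ) :=
  {x | ∑ i, x i = topSum n n ∧ ∀ S : Finset (Fin n), ∑ i ∈ S, x i ≤ topSum n #S}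

variable {n : ℕ}

lemma sum_delta : ∑ i, delta n i = topSum n n :=
  Fin.sum_univ_eq_sum_range (fun i => ((n - 2 - i : ℕ) : ℤ)) n

lemma excess_delta (t : ℤ) :
    excess (delta n) t = ∑ i ∈ range n, ((((n - 2 - i : ℕ) : ℤ) - t).toNat : ℤ) :=
  Fin.sum_univ_eq_sum_range (fun i => ((((n - 2 - i : ℕ) : ℤ) - t).toNat : ℤ)) n

lemma topSum_sub_mul_eq (k : ℕ) (t : ℤ) :
    topSum n k - k * t = ∑ i ∈ range k, (((n - 2 - i : ℕ) : ℤ) - t) := by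
  rw [Finset.sum_sub_distrib, Finset.sum_const, Finset.card_range, nsmul_eq_mul, topSum]

lemma topSum_sub_le_excess_delta {k : ℕ} (hk : k ≤ n) (t : ℤ) :
    topSum n k - k * t ≤ excess (delta n) t := by
  rw [excess_delta, topSum_sub_mul_eq]
  calc ∑ i ∈ range k, (((n - 2 - i : ℕ) : ℤ) - t)
      ≤ ∑ i ∈ range k, ((((n - 2 - i : ℕ) : ℤ) - t).toNat : ℤ) :=
        Finset.sum_le_sum fun i _ => Int.self_le_toNat _
    _ ≤ _ := Finset.sum_le_sum_of_subset_of_nonneg (Finset.range_subset_range.2 hk)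
        fun i _ _ => by positivity

lemma excess_delta_self {k : ℕ} (hk : k ≤ n) :
    excess (delta n) (n - 2 - k : ℕ) = topSum n k - k * (n - 2 - k : ℕ) := by
  rw [excess_delta, ← Finset.sum_subset (Finset.range_subset_range.2 hk) fun i hi hik => by
      simp only [Finset.mem_range] at hi hik; omega, topSum_sub_mul_eq]
  exact Finset.sum_congr rfl fun i hi => by simp only [Finset.mem_range] at hi; omega

lemma sum_delta_le_topSum (S : Finset (Fin n)) : ∑ i ∈ S, delta n i ≤ topSum n #S := by
  have hS : #S ≤ n := by simpa using Finset.card_le_univ S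
  have := sum_sub_card_mul_le_excess (delta n) S (n - 2 - #S : ℕ)
  rw [excess_delta_self hS] at this
  omega

lemma permutahedronVerts_eq_permOrbit :
    permutahedronVerts n = permOrbit fun i => (delta n i : ℝ) := by
  ext y
  simp [permutahedronVerts, permOrbit, delta, eq_comm, funext_iff]

lemma latticePts_eq_majorizedByDelta : latticePts n = majorizedByDelta n := by
  ext x
  show _ ∈ convexHull ℝ _ ↔ _
  rw [permutahedronVerts_eq_permOrbit]
  constructor
  · intro hx
    refine ⟨?_, fun S => ?_⟩
    · have := sum_eq_of_mem_convexHull_permOrbit hx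
      rw [← sum_delta]
      exact_mod_cast this
    · have := sum_le_of_mem_convexHull_permOrbit (S := S) (r := topSum n #S) (fun σ => by
        have h := sum_delta_le_topSum (S.map σ.toEmbedding)
        rw [Finset.sum_map, Finset.card_map] at h
        exact_mod_cast h) hx
      exact_mod_cast this
  · rintro ⟨hsum, hS⟩
    refine mem_convexHull_permOrbit_of_excess_le (delta n) x (by rw [hsum, sum_delta]) fun t => ?_
    have hcard : #{i | t < x i} ≤ n := by simpa using Finset.card_le_univ {i | t < x i}
    rw [excess_eq_sum_filter, Finset.sum_sub_distrib, Finset.sum_const, nsmul_eq_mul]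
    linarith [hS {i | t < x i}, topSum_sub_le_excess_delta hcard t]

lemma two_mul_topSum {k : ℕ} (hk : k < n) : 2 * topSum n k = k * (2 * n - 3 - k) := by
  induction k with
  | zero => simp [topSum]
  | succ k ih =>
    rw [topSum, Finset.sum_range_succ, ← topSum, mul_add, ih (by omega)]
    push_cast
    have : ((n - 2 - k : ℕ) : ℤ) = n - 2 - k := by omega
    rw [this]
    ring

lemma topSum_self : topSum n n = topSum n (n - 1) := by
  rcases n with _ | _
  · rfl
  · rw [topSum, Finset.sum_range_succ, ← topSum]
    simp

lemma two_mul_topSum_self (hn : 1 ≤ n) : 2 * topSum n n = (n - 1) * (n - 2) := by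
  rw [topSum_self, two_mul_topSum (by omega)]
  push_cast [hn]
  ring

lemma topSum_one (hn : 2 ≤ n) : topSum n 1 = n - 2 := by
  rw [topSum, Finset.sum_range_one]
  omega

section majorizedByDelta

variable {x y : Fin n → ℤ}

lemma nonneg_of_mem_majorizedByDelta (hx : x ∈ majorizedByDelta n) (i : Fin n) : 0 ≤ x i := by
  have h := hx.2 (Finset.univ.erase i)
  rw [Finset.card_erase_of_mem (Finset.mem_univ i), Finset.card_univ, Fintype.card_fin,
    ← topSum_self, ← hx.1, ← Finset.add_sum_erase _ _ (Finset.mem_univ i)] at h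
  omega

lemma le_of_mem_majorizedByDelta (hn : 2 ≤ n) (hx : x ∈ majorizedByDelta n) (i : Fin n) :
    x i ≤ n - 2 := by
  simpa [topSum_one hn] using hx.2 {i}

lemma sum_lt_sum_add_of_mem_majorizedByDelta (hx : x ∈ majorizedByDelta n)
    (hy : y ∈ majorizedByDelta n) {B : Finset (Fin n)} (hB₀ : 0 < #B) (hBn : #B < n) :
    ∑ i ∈ B, y i < ∑ i ∈ B, x i + #B * (n - #B) := by
  have hy' := hy.2 B
  have hx' := hx.2 Bᶜ
  have hsum := hx.1
  rw [Finset.card_compl, Fintype.card_fin] at hx'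
  rw [← Finset.sum_add_sum_compl B x] at hsum
  have h₁ := two_mul_topSum (show #B < n from hBn)
  have h₂ := two_mul_topSum (show n - #B < n by omega)
  have h₃ := two_mul_topSum_self (show 1 ≤ n by omega)
  push_cast [hBn.le] at h₂
  nlinarith

lemma eq_of_mem_majorizedByDelta_of_intCast_eq_add (hn : 2 ≤ n) (hx : x ∈ majorizedByDelta n)
    (hy : y ∈ majorizedByDelta n) (c : ZMod n) (h : ∀ i, (x i : ZMod n) = y i + c) : x = y := by
  have : NeZero n := ⟨by omega⟩
  set c' : ℤ := (c.val : ℤ)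
  have hdiff : ∀ i, x i - y i = c' ∨ x i - y i = c' - n := fun i => by
    have hc : ((x i - y i : ℤ) : ZMod n) = c := by push_cast; rw [h i]; ring
    have := nonneg_of_mem_majorizedByDelta hx i; have := le_of_mem_majorizedByDelta hn hx i
    have := nonneg_of_mem_majorizedByDelta hy i; have := le_of_mem_majorizedByDelta hn hy i
    simpa only [hc] using eq_val_or_eq_val_sub (n := n) (d := x i - y i) (by omega) (by omega)
  set B : Finset (Fin n) := {i | x i - y i = c' - n}
  have hsum : ∑ i, (x i - y i) = n * (c' - #B) := by
    rw [Finset.sum_congr rfl fun i _ => show x i - y i = c' - if i ∈ B then (n : ℤ) else 0 by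
      split_ifs with hi <;> simp only [B, Finset.mem_filter, Finset.mem_univ, true_and] at hi <;>
        rcases hdiff i with h | h <;> omega]
    rw [Finset.sum_sub_distrib, Finset.sum_ite_mem, Finset.univ_inter, Finset.sum_const,
      Finset.sum_const, Finset.card_univ, Fintype.card_fin, nsmul_eq_mul, nsmul_eq_mul]
    ring
  have hB : (#B : ℤ) = c' := by
    rw [Finset.sum_sub_distrib, hx.1, hy.1, sub_self, eq_comm, mul_eq_zero] at hsum
    omega
  -- on `B` the vectors differ by `#B - n`, which majorization forbids unless `B = ∅`
  have hB₀ : #B = 0 := by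
    by_contra hB₀
    have hlt := sum_lt_sum_add_of_mem_majorizedByDelta hx hy (B := B) (by omega)
      (by have := ZMod.val_lt c; omega)
    have hBsum : ∑ i ∈ B, x i = ∑ i ∈ B, y i + #B * (#B - n) := by
      rw [← sub_eq_iff_eq_add', ← Finset.sum_sub_distrib, Finset.sum_congr rfl
        fun i hi => (Finset.mem_filter.1 hi).2, Finset.sum_const, nsmul_eq_mul, hB]
    linarith
  funext i
  have hi : i ∉ B := by simp [Finset.card_eq_zero.1 hB₀]
  simp only [B, Finset.mem_filter, Finset.mem_univ, true_and] at hi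
  have := hdiff i
  omega

end majorizedByDelta

def rebalance (w : Fin n → ℤ) (S : Finset (Fin n)) : Fin n → ℤ :=
  fun i => w i + #S - if i ∈ S then (n : ℤ) else 0

lemma sum_rebalance (w : Fin n → ℤ) (S : Finset (Fin n)) :
    ∑ i, rebalance w S i = ∑ i, w i := by
  simp only [rebalance, Finset.sum_sub_distrib, Finset.sum_add_distrib, Finset.sum_ite_mem,
    Finset.univ_inter, Finset.sum_const, Finset.card_univ, Fintype.card_fin, nsmul_eq_mul]
  ring

lemma sum_sq_rebalance (w : Fin n → ℤ) (S : Finset (Fin n)) :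
    ∑ i, rebalance w S i ^ 2 =
      ∑ i, w i ^ 2 + 2 * #S * ∑ i, w i - 2 * n * ∑ i ∈ S, w i + n * #S * (n - #S) := by
  have h : ∀ i, rebalance w S i ^ 2 =
      w i ^ 2 + 2 * #S * w i + #S ^ 2 - if i ∈ S then 2 * n * w i + 2 * n * #S - n ^ 2 else 0 :=
    fun i => by unfold rebalance; split_ifs <;> ring
  simp only [h, Finset.sum_sub_distrib, Finset.sum_add_distrib, Finset.sum_ite_mem,
    Finset.univ_inter, Finset.sum_const, Finset.card_univ, Fintype.card_fin, nsmul_eq_mul,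
    ← Finset.mul_sum]
  ring

lemma intCast_rebalance (w : Fin n → ℤ) (S : Finset (Fin n)) (i : Fin n) :
    (rebalance w S i : ZMod n) = w i + #S := by
  simp only [rebalance]
  split_ifs <;> push_cast [ZMod.natCast_self] <;> ring

theorem exists_mem_majorizedByDelta_intCast_eq_add (hn : 2 ≤ n) (w : Fin n → ℤ)
    (hw : ∑ i, w i = topSum n n) :
    ∃ x ∈ majorizedByDelta n, ∃ c : ZMod n, ∀ i, (x i : ZMod n) = w i + c := by
  by_cases hS : ∀ S : Finset (Fin n), ∑ i ∈ S, w i ≤ topSum n #S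
  · exact ⟨w, ⟨hw, hS⟩, 0, fun i => (add_zero _).symm⟩
  · obtain ⟨S, hS⟩ := not_forall.1 hS
    obtain ⟨x, hx, c, hc⟩ :=
      exists_mem_majorizedByDelta_intCast_eq_add hn (rebalance w S) (by rw [sum_rebalance, hw])
    exact ⟨x, hx, #S + c, fun i => by rw [hc, intCast_rebalance, add_assoc]⟩
termination_by (∑ i, w i ^ 2).toNat
decreasing_by
  have hSn : #S < n := by
    refine lt_of_le_of_ne (by simpa using Finset.card_le_univ S) fun h => hS ?_
    rw [Finset.eq_univ_of_card S (by simpa using h), hw, Finset.card_univ, Fintype.card_fin]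
  -- by the closed forms of `topSum`, the sum of squares drops by
  -- `2n (∑ i ∈ S, w i - topSum n #S) - 2 #S ≥ 2 (n - #S)`
  have h₁ := two_mul_topSum hSn
  have h₂ := two_mul_topSum_self (show 1 ≤ n by omega)
  have hsq := sum_sq_rebalance w S
  rw [hw] at hsq
  have : 0 ≤ ∑ i, rebalance w S i ^ 2 := Finset.sum_nonneg fun i _ => sq_nonneg _
  have : ∑ i, rebalance w S i ^ 2 < ∑ i, w i ^ 2 := by nlinarith
  omega

lemma card_majorizedByDelta_mul (hn : 2 ≤ n) :
    Nat.card (majorizedByDelta n) * n =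
      Nat.card {v : Fin n → ZMod n // ∑ i, v i = topSum n n} := by
  have : NeZero n := ⟨by omega⟩
  have hsum (x : majorizedByDelta n) (c : ZMod n) :
      ∑ i, ((x.1 i : ZMod n) + c) = (topSum n n : ZMod n) := by
    rw [Finset.sum_add_distrib, Finset.sum_const, Finset.card_univ, Fintype.card_fin, nsmul_eq_mul,
      ZMod.natCast_self, zero_mul, add_zero, ← x.2.1]
    push_cast
    rfl
  let f : majorizedByDelta n × ZMod n → {v : Fin n → ZMod n // ∑ i, v i = topSum n n} :=
    fun p => ⟨fun i => p.1.1 i + p.2, hsum p.1 p.2⟩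
  have hf : Function.Bijective f := by
    refine ⟨fun ⟨x, c⟩ ⟨y, d⟩ hxy => ?_, fun ⟨v, hv⟩ => ?_⟩
    · have h : ∀ i, (x.1 i : ZMod n) + c = y.1 i + d := fun i =>
        congrFun (congrArg Subtype.val hxy) i
      obtain rfl : x = y := Subtype.ext <|
        eq_of_mem_majorizedByDelta_of_intCast_eq_add hn x.2 y.2 (d - c)
          fun i => by rw [add_sub, ← h]; ring
      simpa using h ⟨0, by omega⟩
    · obtain ⟨w, hw, hwv⟩ := exists_intCast_eq_of_sum_eq ⟨0, by omega⟩ v hv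
      obtain ⟨x, hx, c, hxc⟩ := exists_mem_majorizedByDelta_intCast_eq_add hn w hw
      exact ⟨(⟨x, hx⟩, -c), Subtype.ext <| funext fun i => by simp [f, hxc, hwv]⟩
  rw [← Nat.card_congr (Equiv.ofBijective f hf), Nat.card_prod, Nat.card_zmod]

end Permutahedron

open Permutahedron in
/-- The number of lattice points of the permutahedron `P_{δ_n}` equals `n^{n-2}`. -/
theorem card_latticePts (n : ℕ) (hn : 2 ≤ n) :
    Nat.card (latticePts n) = n ^ (n - 2) := by
  have : NeZero n := ⟨by omega⟩
  have hX := card_majorizedByDelta_mul hn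
  have hV := card_sum_eq_mul_card (⟨0, by omega⟩ : Fin n) (topSum n n : ZMod n)
  rw [Nat.card_zmod, Fintype.card_fin, ← hX] at hV
  rw [latticePts_eq_majorizedByDelta]
  have hn₀ : 0 < n := by omega
  refine Nat.eq_of_mul_eq_mul_right hn₀ (Nat.eq_of_mul_eq_mul_right hn₀ ?_)
  rw [hV, ← pow_succ, ← pow_succ]
  congr 1
  omega
end

section
/- Let n ≥ 2 and let λ = (λ_1 ≥ ⋯ ≥ λ_n) be a weakly decreasing tuple of nonnegative integers with λ_1 + ⋯ + λ_n = (n−1)(n−2)/2 that is dominated by δ_n. Then for every j with 1 ≤ j ≤ n−1, the tuple sort(shift^j(λ)) does not satisfy both of these conditions; that is, either its coordinate sum is not (n−1)(n−2)/2 or it is not dominated by δ_n. -/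
/-- A tuple `μ` of length `n` is dominated by `δ_n` if all its partial sums are bounded
by the corresponding partial sums of `δ_n`. -/
def dominatedByDelta (n : ℕ) (l : Fin n → ℕ) : Prop :=
  ∀ k : ℕ, k ≤ n →
    ∑ i ∈ Finset.univ.filter (fun i : Fin n => (i : ℕ) < k), l i ≤
      ∑ i ∈ Finset.univ.filter (fun i : Fin n => (i : ℕ) < k), deltaTuple n i

/-- The shift map: add `1` to every coordinate and reduce modulo `n` so as to lie in
`{0,…,n-1}`. -/
def shiftMod (n : ℕ) {N : ℕ} (x : Fin N → ℕ) : Fin N → ℕ :=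
  fun i => (x i + 1) % n

/-- The weakly decreasing rearrangement of a tuple. -/
def sortDesc {N : ℕ} {α : Type*} [LinearOrder α] (x : Fin N → α) : Fin N → α :=
  fun i => x (Tuple.sort x i.rev)

/-!
Write `x = shiftʲ λ`; since `λ i ≤ n - 2`, `x i = λ i + j` except on the set `W` of coordinates
that wrap around, where `x i = λ i + j - n`. If `sort x` has the same sum as `λ`, then `#W = j`.
A `k`-element subfamily of a tuple sums to at most the first `k` entries of its decreasing
rearrangement, so domination of `λ` at `j` and of `sort x` at `n - j` give
`∑_W λ ≤ δ₁ + ⋯ + δ_j` and `∑_{Wᶜ} λ + (n - j) j ≤ δ₁ + ⋯ + δ_{n-j}`.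
Adding them contradicts `(δ₁ + ⋯ + δ_j) + (δ₁ + ⋯ + δ_{n-j}) = |λ| + (n - j) j - 1`.
-/

open Finset

section SumOrdered

variable {ι M : Type*} [AddCommMonoid M] [LinearOrder M] [IsOrderedAddMonoid M]

theorem Finset.sum_le_sum_of_card_eq_of_forall_le {A B : Finset ι} (f : ι → M)
    (hcard : #A = #B) (hle : ∀ a ∈ A, ∀ b ∈ B, f a ≤ f b) :
    ∑ a ∈ A, f a ≤ ∑ b ∈ B, f b := by
  rcases B.eq_empty_or_nonempty with rfl | hB
  · simp_all
  obtain ⟨b₀, hb₀, hmin⟩ := B.exists_min_image f hB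
  calc ∑ a ∈ A, f a ≤ #A • f b₀ := A.sum_le_card_nsmul f _ fun a ha => hle a ha b₀ hb₀
    _ = #B • f b₀ := by rw [hcard]
    _ ≤ ∑ b ∈ B, f b := B.card_nsmul_le_sum f _ hmin

theorem Antitone.sum_le_sum_filter_val_lt {n : ℕ} {f : Fin n → M} (hf : Antitone f)
    (s : Finset (Fin n)) :
    ∑ i ∈ s, f i ≤ ∑ i ∈ univ.filter (fun i : Fin n => (i : ℕ) < #s), f i := by
  set I := univ.filter (fun i : Fin n => (i : ℕ) < #s)
  have hI : #I = #s := by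
    simpa [I, Fin.card_filter_val_lt] using s.card_le_univ
  rw [← sum_inter_add_sum_sdiff s I, ← sum_inter_add_sum_sdiff I s, inter_comm]
  refine add_le_add_right (sum_le_sum_of_card_eq_of_forall_le f (card_sdiff_comm hI.symm) ?_) _
  intro a ha b hb
  simp only [I, mem_sdiff, mem_filter, mem_univ, true_and, not_lt] at ha hb
  exact hf (Fin.le_def.mpr (by omega))

theorem sum_le_sum_filter_val_lt_sortDesc {n : ℕ} (x : Fin n → M) (s : Finset (Fin n)) :
    ∑ i ∈ s, x i ≤ ∑ i ∈ univ.filter (fun i : Fin n => (i : ℕ) < #s), sortDesc x i := by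
  set e : Equiv.Perm (Fin n) := Fin.revPerm.trans (Tuple.sort x)
  have hanti : Antitone (sortDesc x) := fun a b hab => Tuple.monotone_sort x (Fin.rev_le_rev.mpr hab)
  calc ∑ i ∈ s, x i = ∑ i ∈ s.map e.symm.toEmbedding, sortDesc x i := by
        simp [sortDesc, e]
    _ ≤ _ := by simpa using hanti.sum_le_sum_filter_val_lt (s.map e.symm.toEmbedding)

end SumOrdered

theorem sum_sortDesc {M : Type*} [AddCommMonoid M] [LinearOrder M] {n : ℕ} (x : Fin n → M) :
    ∑ i, sortDesc x i = ∑ i, x i :=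
  Equiv.sum_comp (Fin.revPerm.trans (Tuple.sort x)) x

theorem Fin.sum_filter_val_lt_eq_sum_range {M : Type*} [AddCommMonoid M] {n k : ℕ} (g : ℕ → M)
    (hk : k ≤ n) :
    ∑ i ∈ univ.filter (fun i : Fin n => (i : ℕ) < k), g i = ∑ t ∈ range k, g t := by
  have : (univ.filter (fun i : Fin n => (i : ℕ) < k)).map Fin.valEmbedding = range k := by
    ext t
    simp only [mem_map, mem_filter, mem_univ, true_and, Fin.valEmbedding_apply, mem_range]
    exact ⟨fun ⟨i, hi, hit⟩ => hit ▸ hi, fun ht => ⟨⟨t, by omega⟩, ht, rfl⟩⟩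
  rw [← this, sum_map]
  rfl

theorem two_mul_sum_range_sub_two_sub {n k : ℕ} (hk : k ≤ n - 1) :
    2 * ∑ t ∈ range k, (n - 2 - t) + k * (k + 1) = 2 * k * (n - 1) := by
  induction k with
  | zero => simp
  | succ k ih =>
    rw [sum_range_succ]
    have := ih (by omega)
    have : n - 2 - k + (k + 1) = n - 1 := by omega
    linarith

theorem sum_deltaTuple_lt_add_sum_deltaTuple_lt_sub {n j : ℕ} (hj : 1 ≤ j) (hjn : j ≤ n - 1) :
    ∑ i ∈ univ.filter (fun i : Fin n => (i : ℕ) < j), deltaTuple n i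
      + ∑ i ∈ univ.filter (fun i : Fin n => (i : ℕ) < n - j), deltaTuple n i + 1
      = (n - 1) * (n - 2) / 2 + (n - j) * j := by
  simp only [deltaTuple, Fin.sum_filter_val_lt_eq_sum_range (fun t => n - 2 - t) (by omega : j ≤ n),
    Fin.sum_filter_val_lt_eq_sum_range (fun t => n - 2 - t) (by omega : n - j ≤ n)]
  have h₁ := two_mul_sum_range_sub_two_sub (n := n) hjn
  have h₂ := two_mul_sum_range_sub_two_sub (n := n) (k := n - j) (by omega)
  generalize ∑ t ∈ range j, (n - 2 - t) = P₁ at h₁ ⊢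
  generalize ∑ t ∈ range (n - j), (n - 2 - t) = P₂ at h₂ ⊢
  obtain ⟨i, rfl⟩ : ∃ i, j = i + 1 := ⟨j - 1, by omega⟩
  obtain ⟨m, rfl⟩ : ∃ m, n = i + m + 2 := ⟨n - i - 2, by omega⟩
  simp only [show i + m + 2 - 1 = i + m + 1 by omega, show i + m + 2 - 2 = i + m by omega,
    show i + m + 2 - (i + 1) = m + 1 by omega] at h₁ h₂ ⊢
  have hS : 2 * ((i + m + 1) * (i + m) / 2) = (i + m + 1) * (i + m) :=
    Nat.two_mul_div_two_of_even (by simpa [mul_comm] using Nat.even_mul_succ_self (i + m))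
  generalize (i + m + 1) * (i + m) / 2 = S at hS ⊢
  linarith

theorem le_sub_two_of_dominatedByDelta {n : ℕ} {l : Fin n → ℕ} (hl : Antitone l)
    (hdom : dominatedByDelta n l) (i : Fin n) : l i ≤ n - 2 := by
  have hn : 1 ≤ n := i.pos
  calc l i = ∑ k ∈ {i}, l k := (sum_singleton l i).symm
    _ ≤ ∑ k ∈ univ.filter (fun k : Fin n => (k : ℕ) < 1), l k := by
        simpa using hl.sum_le_sum_filter_val_lt {i}
    _ ≤ ∑ k ∈ univ.filter (fun k : Fin n => (k : ℕ) < 1), deltaTuple n k := hdom 1 hn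
    _ = n - 2 := by
        simp only [deltaTuple, Fin.sum_filter_val_lt_eq_sum_range (fun t => n - 2 - t) hn]
        simp

theorem shiftMod_iterate {n N : ℕ} {x : Fin N → ℕ} (hx : ∀ i, x i < n) (j : ℕ) :
    (shiftMod n)^[j] x = fun i => (x i + j) % n := by
  induction j with
  | zero => funext i; simp [Nat.mod_eq_of_lt (hx i)]
  | succ j ih =>
    rw [Function.iterate_succ_apply', ih]
    funext i
    simp only [shiftMod, Nat.mod_add_mod, add_assoc]

theorem sum_mod_add_mul_card_wrap {ι : Type*} [Fintype ι] {n : ℕ} (a : ι → ℕ)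
    (ha : ∀ i, a i < 2 * n) :
    ∑ i, a i % n + n * #(univ.filter (fun i => n ≤ a i)) = ∑ i, a i := by
  rw [card_filter, mul_sum, ← sum_add_distrib]
  refine sum_congr rfl fun i _ => ?_
  split_ifs with h
  · rw [Nat.mod_eq_sub_mod h, Nat.mod_eq_of_lt (by have := ha i; omega)]
    omega
  · rw [Nat.mod_eq_of_lt (not_le.mp h)]
    simp

theorem shift_not_dominated_general (n : ℕ) (l : Fin n → ℕ)
    (hdec : Antitone l) (hsum : ∑ i, l i = (n - 1) * (n - 2) / 2)
    (hdom : dominatedByDelta n l) :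
    ∀ j : ℕ, 1 ≤ j → j ≤ n - 1 →
      ¬ (∑ i, sortDesc ((shiftMod n)^[j] l) i = (n - 1) * (n - 2) / 2 ∧
          dominatedByDelta n (sortDesc ((shiftMod n)^[j] l))) := by
  rintro j hj hjn ⟨hsum', hdom'⟩
  have hl := le_sub_two_of_dominatedByDelta hdec hdom
  rw [shiftMod_iterate (n := n) (x := l) (fun i => by have := hl i; omega) j] at hsum' hdom'
  have hwrap := sum_mod_add_mul_card_wrap (n := n) (fun i => l i + j)
    (fun i => by have := hl i; omega)
  rw [sum_add_distrib, sum_const, card_univ, Fintype.card_fin, smul_eq_mul, ← sum_sortDesc,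
    hsum', ← hsum] at hwrap
  set W := univ.filter (fun i => n ≤ l i + j)
  have hW : #W = j := Nat.eq_of_mul_eq_mul_left (show 0 < n by omega) (by omega)
  have hWc : #Wᶜ = n - j := by rw [card_compl, Fintype.card_fin, hW]
  have hlow := (hdec.sum_le_sum_filter_val_lt W).trans (hdom _ (by omega))
  have hhigh : ∑ i ∈ Wᶜ, l i + (n - j) * j ≤ _ := calc
    ∑ i ∈ Wᶜ, l i + (n - j) * j = ∑ i ∈ Wᶜ, (l i + j) := by
      rw [sum_add_distrib, sum_const, hWc, smul_eq_mul]
    _ = ∑ i ∈ Wᶜ, (l i + j) % n :=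
      sum_congr rfl fun i hi => (Nat.mod_eq_of_lt (by simpa [W] using hi)).symm
    _ ≤ _ := sum_le_sum_filter_val_lt_sortDesc _ _
    _ ≤ _ := hdom' _ (by omega)
  rw [hW] at hlow
  rw [hWc] at hhigh
  have hsplit := sum_add_sum_compl W l
  have hδ := sum_deltaTuple_lt_add_sum_deltaTuple_lt_sub hj hjn
  omega

/-- If `λ` is a weakly decreasing tuple of nonnegative integers with coordinate sum
`(n-1)(n-2)/2` dominated by `δ_n`, then for `1 ≤ j ≤ n-1` the tuple `sort(shiftʲ(λ))`
fails to have coordinate sum `(n-1)(n-2)/2` or fails to be dominated by `δ_n`. -/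
theorem shift_not_dominated (n : ℕ) (hn : 2 ≤ n) (l : Fin n → ℕ)
    (hdec : Antitone l) (hsum : ∑ i, l i = (n - 1) * (n - 2) / 2)
    (hdom : dominatedByDelta n l) :
    ∀ j : ℕ, 1 ≤ j → j ≤ n - 1 →
      ¬ (∑ i, sortDesc ((shiftMod n)^[j] l) i = (n - 1) * (n - 2) / 2 ∧
          dominatedByDelta n (sortDesc ((shiftMod n)^[j] l))) :=
  shift_not_dominated_general n l hdec hsum hdom
end
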